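/- Let 0 → V → W → N → 0 be a short exact sequence of vector bundles on a projective variety Y over an algebraically closed field, with W ≅ O_Y^{⊕l} trivial. Then for any dominant proper morphism φ: Y_0 → Y with Y_0 integral, the pullback map H^0(Y, V) → H^0(Y_0, φ^*V) is an isomorphism. -/

import Mathlib

open CategoryTheory Limits

universe v u

namespace CategoryTheory.ShortComplex

variable {C C' : Type*} [Category C] [Abelian C] [Category C'] [HasZeroMorphisms C']
  (F : C ⥤ C') [F.PreservesZeroMorphisms] {A : C} {A' : C'} (e : A' ⟶ F.obj A)

/-- A diagram chase: a section `t` of `F X₁` is lifted by first lifting `t ≫ F f` to a section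
`s` of `X₂`; injectivity on `X₃` forces `s ≫ g = 0`, so `s` factors through `f`. -/
lemma ShortExact.surjective_comp_map_of_surjective_of_injective {S : ShortComplex C}
    (hS : S.ShortExact) [Mono (F.map S.f)]
    (hX₂ : Function.Surjective fun s : A ⟶ S.X₂ => e ≫ F.map s)
    (hX₃ : Function.Injective fun s : A ⟶ S.X₃ => e ≫ F.map s) :
    Function.Surjective fun s : A ⟶ S.X₁ => e ≫ F.map s := by
  intro t
  obtain ⟨s, hs⟩ := hX₂ (t ≫ F.map S.f)
  replace hs : e ≫ F.map s = t ≫ F.map S.f := hs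
  have hsg : s ≫ S.g = 0 := hX₃ <| by
    change e ≫ F.map (s ≫ S.g) = e ≫ F.map 0
    rw [F.map_comp, reassoc_of% hs, ← F.map_comp, S.zero]
    simp only [F.map_zero, comp_zero]
  have := hS.mono_f
  refine ⟨hS.exact.lift s hsg, (cancel_mono (F.map S.f)).1 ?_⟩
  simpa only [Category.assoc, ← F.map_comp, hS.exact.lift_f] using hs

end CategoryTheory.ShortComplex

theorem global_sections_iso_of_sub_of_trivial_general
    {C : Type u} [Category.{v} C] [Abelian C]
    {C' : Type u} [Category.{v} C'] [Abelian C']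
    (P : C ⥤ C') [P.Additive]                    -- pullback φ*
    (OY : C) (OY' : C') (hunit : P.obj OY ≅ OY')
    -- the short exact sequence 0 → V → W → N → 0 with W trivial:
    (V W N : C) (f : V ⟶ W) (g : W ⟶ N) (hfg : f ≫ g = 0)
    (hexact : (ShortComplex.mk f g hfg).ShortExact)
    -- pullback preserves the exact sequence:
    (hfg' : P.map f ≫ P.map g = 0)
    (hexact' : (ShortComplex.mk (P.map f) (P.map g) hfg').ShortExact)
    -- pullback is injective on global sections (φ dominant, Y₀ integral):
    (hinj : ∀ (E : C), Function.Injective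
      (fun s : OY ⟶ E => hunit.inv ≫ P.map s))
    -- and bijective on global sections of the trivial bundle W:
    (hWbij : Function.Bijective (fun s : OY ⟶ W => hunit.inv ≫ P.map s)) :
    Function.Bijective (fun s : OY ⟶ V => hunit.inv ≫ P.map s) := by
  have : Mono (P.map f) := hexact'.mono_f
  exact ⟨hinj V,
    hexact.surjective_comp_map_of_surjective_of_injective P hunit.inv hWbij.2 (hinj N)⟩

/-- **Lemma 2.5: global sections of subbundles of trivial bundles do not grow
under dominant proper pullback.**
`C` is the category of coherent sheaves on a projective variety `Y` over an
algebraically closed field, `C'` that on an integral scheme `Y₀`, `P` the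
pullback functor along a dominant proper morphism `φ : Y₀ → Y`, carrying the
structure sheaf `O_Y` to `O_{Y₀}`.  Global sections `H⁰(E) = Hom(O, E)`, and the
pullback map on global sections is `s ↦ φ*(s)`.  For such `φ` this map is
injective for every sheaf, and bijective for the trivial bundle `W ≅ O_Y^{⊕l}`;
pullback preserves the exactness of `0 → V → W → N → 0`.  Conclusion: the
pullback map `H⁰(Y, V) → H⁰(Y₀, φ*V)` is an isomorphism. -/
theorem global_sections_iso_of_sub_of_trivial
    {C : Type u} [Category.{v} C] [Abelian C] [HasFiniteBiproducts C]
    {C' : Type u} [Category.{v} C'] [Abelian C']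
    (P : C ⥤ C') [P.Additive]                    -- pullback φ*
    (OY : C) (OY' : C') (hunit : P.obj OY ≅ OY')
    -- the short exact sequence 0 → V → W → N → 0 with W trivial:
    (V W N : C) (f : V ⟶ W) (g : W ⟶ N) (hfg : f ≫ g = 0)
    (hexact : (ShortComplex.mk f g hfg).ShortExact)
    (l : ℕ) (hW : W ≅ ⨁ fun _ : Fin l => OY)
    -- pullback preserves the exact sequence:
    (hfg' : P.map f ≫ P.map g = 0)
    (hexact' : (ShortComplex.mk (P.map f) (P.map g) hfg').ShortExact)
    -- pullback is injective on global sections (φ dominant, Y₀ integral):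
    (hinj : ∀ (E : C), Function.Injective
      (fun s : OY ⟶ E => hunit.inv ≫ P.map s))
    -- and bijective on global sections of the trivial bundle W:
    (hWbij : Function.Bijective (fun s : OY ⟶ W => hunit.inv ≫ P.map s)) :
    Function.Bijective (fun s : OY ⟶ V => hunit.inv ≫ P.map s) :=
  global_sections_iso_of_sub_of_trivial_general P OY OY' hunit V W N f g hfg hexact hfg' hexact'
    hinj hWbij
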